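/- Let q ∈ ℂ with q ≠ 0 and q^{2m} ≠ 1 for all 1 ≤ m ≤ ℓ, and let A, B ⊆ {1,…,ℓ} with |A| = i, |B| = j. Then on (ℂ²)^{⊗ℓ}: P^{(ℓ)} · |1_A⟩⟨1_B| · q^{−(Σ_{a∈A} a) + i} = [ℓ choose i]_q^{−1} q^{−i(i−1)/2} · ||ℓ,i⟩ ⟨1_B|; in particular the left-hand side is independent of the choice of A. -/

import Mathlib

noncomputable section

/-- The q-integer `[n]_q = (qⁿ − q⁻ⁿ)/(q − q⁻¹)`. -/
def qint (q : ℂ) (n : ℕ) : ℂ := (q ^ (n : ℤ) - q ^ (-(n : ℤ))) / (q - q⁻¹)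

/-- The q-factorial `[n]_q! = ∏_{m=1}^n [m]_q`. -/
def qfact (q : ℂ) (n : ℕ) : ℂ := ∏ m ∈ Finset.range n, qint q (m + 1)

/-- The q-binomial coefficient `[l choose n]_q`. -/
def qbinom (q : ℂ) (l n : ℕ) : ℂ := qfact q l / (qfact q (l - n) * qfact q n)
/-- Index of the standard basis of `(ℂ²)^{⊗l}`: spin configurations `{0,1}^l`. -/
abbrev SpinIdx (l : ℕ) := Fin l → Fin 2

/-- Vectors in `(ℂ²)^{⊗l}`. -/
abbrev SpinVec (l : ℕ) := SpinIdx l → ℂ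

/-- Operators (matrices) on `(ℂ²)^{⊗l}`. -/
abbrev SpinOp (l : ℕ) := Matrix (SpinIdx l) (SpinIdx l) ℂ

/-- The indicator configuration of a subset `A`: down spins exactly on `A`. -/
def indFun {l : ℕ} (A : Finset (Fin l)) : SpinIdx l := fun k => if k ∈ A then 1 else 0

/-- The standard basis vector `|1_A⟩` with down spins exactly on `A`. -/
def bvec {l : ℕ} (A : Finset (Fin l)) : SpinVec l := fun ε => if ε = indFun A then 1 else 0

/-- `Σ_{a ∈ A} a`, where the site `k : Fin l` has 1-based number `k+1 ∈ {1,…,l}`. -/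
def siteSum {l : ℕ} (A : Finset (Fin l)) : ℤ := ∑ a ∈ A, ((a : ℤ) + 1)

/-- Coefficient `q^{(Σ_{a∈A} a) − i·l + i(i−1)/2}`. -/
def hwt (q : ℂ) {l : ℕ} (i : ℕ) (A : Finset (Fin l)) : ℂ :=
  q ^ (siteSum A - (i : ℤ) * (l : ℤ) + (i : ℤ) * ((i : ℤ) - 1) / 2)

/-- The spin-`l/2` basis vector `||l,i⟩`. -/
def hv (q : ℂ) (l i : ℕ) : SpinVec l :=
  ∑ A ∈ Finset.powersetCard i (Finset.univ : Finset (Fin l)), hwt q i A • bvec A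

/-- The conjugate covector `⟨l,j||` (represented by its coefficient vector; the pairing
is the bilinear transpose pairing). -/
def cv (q : ℂ) (l j : ℕ) : SpinVec l :=
  ((qbinom q l j)⁻¹ * q ^ ((j : ℤ) * ((l : ℤ) - (j : ℤ)))) •
    ∑ B ∈ Finset.powersetCard j (Finset.univ : Finset (Fin l)), hwt q j B • bvec B

/-- The rank-one operator `|u⟩⟨v|` (transpose pairing). -/
def rankOne {l : ℕ} (u v : SpinVec l) : SpinOp l := Matrix.of fun ε ε' => u ε * v ε'

/-- The spin-`l/2` projector `P^{(l)} = Σ_{n=0}^{l} ||l,n⟩⟨l,n||`. -/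
def proj (q : ℂ) (l : ℕ) : SpinOp l :=
  ∑ n ∈ Finset.range (l + 1), rankOne (hv q l n) (cv q l n)

/-- The elementary operator `e_k^{a,b}` acting on the k-th tensor factor. -/
def elem {l : ℕ} (k : Fin l) (a b : Fin 2) : SpinOp l :=
  Matrix.of fun ε ε' => if ε k = a ∧ ε' k = b ∧ ∀ m, m ≠ k → ε m = ε' m then 1 else 0

/-- The ordered product `e_1^{e'_1,e_1} ⋯ e_l^{e'_l,e_l}`. -/
def elemProd {l : ℕ} (e' e : Fin l → Fin 2) : SpinOp l :=
  (List.ofFn fun k : Fin l => elem k (e' k) (e k)).prod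

/-- The gauge matrix `⊗_s diag(1, e^{w s})`. -/
def gaugeM {S : Type*} [Fintype S] [DecidableEq S] (w : S → ℂ) :
    Matrix (S → Fin 2) (S → Fin 2) ℂ :=
  Matrix.diagonal fun ε => ∏ s, if ε s = 1 then Complex.exp (w s) else 1

lemma indFun_injective {l : ℕ} : Function.Injective (indFun (l := l)) := by
  intro A B h
  ext k
  simpa [indFun] using congrArg (· = 1) (congrFun h k)

lemma bvec_apply_indFun {l : ℕ} (A B : Finset (Fin l)) :
    bvec B (indFun A) = if B = A then 1 else 0 := by
  simp [bvec, indFun_injective.eq_iff, eq_comm]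

lemma dotProduct_bvec {l : ℕ} (y : SpinVec l) (A : Finset (Fin l)) :
    y ⬝ᵥ bvec A = y (indFun A) := by
  simp [dotProduct, bvec]

lemma rankOne_mul_rankOne {l : ℕ} (x y u v : SpinVec l) :
    rankOne x y * rankOne u v = (y ⬝ᵥ u) • rankOne x v := by
  ext ε ε'
  simp only [rankOne, Matrix.mul_apply, Matrix.smul_apply, Matrix.of_apply, smul_eq_mul,
    dotProduct, Finset.sum_mul]
  exact Finset.sum_congr rfl fun κ _ => by ring

lemma cv_apply_indFun (q : ℂ) {l : ℕ} (n : ℕ) (A : Finset (Fin l)) :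
    cv q l n (indFun A) =
      if A.card = n then (qbinom q l n)⁻¹ * q ^ ((n : ℤ) * ((l : ℤ) - (n : ℤ))) * hwt q n A
      else 0 := by
  simp only [cv, Pi.smul_apply, Finset.sum_apply, smul_eq_mul, bvec_apply_indFun, mul_ite,
    mul_one, mul_zero, Finset.sum_ite_eq', Finset.mem_powersetCard_univ]

/-- `⟨l,n||` vanishes on `|1_A⟩` unless `n = |A|`, so a single summand of `P^{(l)}` survives. -/
lemma proj_mul_rankOne_bvec (q : ℂ) {l : ℕ} (A : Finset (Fin l)) (w : SpinVec l) :
    proj q l * rankOne (bvec A) w = cv q l A.card (indFun A) • rankOne (hv q l A.card) w := by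
  have hcard : A.card ∈ Finset.range (l + 1) := by
    simpa [Nat.lt_succ_iff] using A.card_le_univ
  rw [proj, Finset.sum_mul, Finset.sum_eq_single_of_mem A.card hcard]
  · rw [rankOne_mul_rankOne, dotProduct_bvec]
  · intro n _ hn
    rw [rankOne_mul_rankOne, dotProduct_bvec, cv_apply_indFun, if_neg (Ne.symm hn), zero_smul]

lemma zpow_mul_zpow_mul_hwt (q : ℂ) (hq : q ≠ 0) {l : ℕ} (i : ℕ) (A : Finset (Fin l)) :
    q ^ (-siteSum A + i) * (q ^ ((i : ℤ) * ((l : ℤ) - i)) * hwt q i A)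
      = q ^ (-((i : ℤ) * ((i : ℤ) - 1) / 2)) := by
  have htwice : 2 * ((i : ℤ) * ((i : ℤ) - 1) / 2) = (i : ℤ) * ((i : ℤ) - 1) :=
    Int.mul_ediv_cancel' (Int.even_mul_pred_self i).two_dvd
  rw [hwt, ← zpow_add₀ hq, ← zpow_add₀ hq]
  congr 1
  linear_combination htwice

theorem proj_rankOne_independent_general (ℓ : ℕ) (q : ℂ) (hq : q ≠ 0)
    (i : ℕ) (A B : Finset (Fin ℓ)) (hA : A.card = i) :
    q ^ (-(siteSum A) + (i : ℤ)) • (proj q ℓ * rankOne (bvec A) (bvec B))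
      = ((qbinom q ℓ i)⁻¹ * q ^ (-((i : ℤ) * ((i : ℤ) - 1) / 2))) •
          rankOne (hv q ℓ i) (bvec B) := by
  subst hA
  rw [proj_mul_rankOne_bvec, cv_apply_indFun, if_pos rfl, smul_smul,
    ← zpow_mul_zpow_mul_hwt q hq A.card A]
  congr 1
  ring

/-- For `A, B ⊆ {1,…,ℓ}` with `|A| = i`, `|B| = j`:
`P^{(ℓ)} |1_A⟩⟨1_B| · q^{−(Σ_{a∈A} a) + i}
  = [ℓ choose i]_q^{−1} q^{−i(i−1)/2} ||ℓ,i⟩⟨1_B|`;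
in particular the left-hand side is independent of `A`. -/
theorem proj_rankOne_independent (ℓ : ℕ) (q : ℂ) (hq : q ≠ 0)
    (hroot : ∀ m : ℕ, 1 ≤ m → m ≤ ℓ → q ^ (2 * m) ≠ 1)
    (i j : ℕ) (A B : Finset (Fin ℓ)) (hA : A.card = i) (hB : B.card = j) :
    q ^ (-(siteSum A) + (i : ℤ)) • (proj q ℓ * rankOne (bvec A) (bvec B))
      = ((qbinom q ℓ i)⁻¹ * q ^ (-((i : ℤ) * ((i : ℤ) - 1) / 2))) •
          rankOne (hv q ℓ i) (bvec B) :=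
  proj_rankOne_independent_general ℓ q hq i A B hA
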